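/- Under the prior (1−w)δ₀ + w γ(·;c) on μ and X|μ ∼ N(μ,1), the posterior median δ(x;w,c) is a nondecreasing function of x. -/

import Mathlib

/-! The Gaussian location family has a monotone likelihood ratio: for `x ≤ x'` the ratio
`φ(x' - μ) / φ(x - μ)` is nondecreasing in `μ`. So, whatever the prior, passing from `x` to `x'`
multiplies the unnormalised posterior by a weight that is at most its value `k` at `t` on
`(-∞, t]` and at least `k` on `(t, ∞)`, and the posterior probability of `(-∞, t]` decreases.
Hence the sets `{t | F_x(t) ≥ 1/2}` shrink as `x` grows and their infima, the posterior medians,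
increase. The spike-and-slab prior is a probability measure, so this applies to it. -/

open MeasureTheory Real

/-- Standard normal density. -/
noncomputable def stdN (x : ℝ) : ℝ := (Real.sqrt (2 * Real.pi))⁻¹ * Real.exp (-x ^ 2 / 2)

/-- Convolution `g(x;c) = ∫ φ(x−μ) γ₀(μ−c) dμ`. -/
noncomputable def conv (γ₀ : ℝ → ℝ) (c x : ℝ) : ℝ := ∫ μ : ℝ, stdN (x - μ) * γ₀ (μ - c)

/-- Marginal density `m(x;w,c) = (1−w)φ(x) + w g(x;c)`. -/
noncomputable def marg (γ₀ : ℝ → ℝ) (w c x : ℝ) : ℝ := (1 - w) * stdN x + w * conv γ₀ c x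

/-- Posterior CDF of `μ` given `X = x` under the prior `(1−w)δ₀ + w γ₀(·−c)`
and likelihood `X | μ ∼ N(μ,1)`. -/
noncomputable def postCDF (γ₀ : ℝ → ℝ) (w c x t : ℝ) : ℝ :=
  ((1 - w) * stdN x * (if (0:ℝ) ≤ t then 1 else 0)
    + w * ∫ μ in Set.Iic t, stdN (x - μ) * γ₀ (μ - c)) / marg γ₀ w c x

/-- Posterior median. -/
noncomputable def postMedian (γ₀ : ℝ → ℝ) (w c x : ℝ) : ℝ :=
  sInf {t : ℝ | 1 / 2 ≤ postCDF γ₀ w c x t}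

open Set Filter Topology

lemma stdN_pos (x : ℝ) : 0 < stdN x := by
  unfold stdN
  positivity

lemma stdN_le_inv_sqrt_two_pi (x : ℝ) : stdN x ≤ (√(2 * π))⁻¹ := by
  unfold stdN
  refine mul_le_of_le_one_right (by positivity) (exp_le_one_iff.2 ?_)
  nlinarith [sq_nonneg x]

lemma continuous_stdN : Continuous stdN := by
  unfold stdN
  fun_prop

lemma stdN_sub_mul_stdN_sub_le {x x' u v : ℝ} (hx : x ≤ x') (huv : u ≤ v) :
    stdN (x' - u) * stdN (x - v) ≤ stdN (x' - v) * stdN (x - u) := by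
  unfold stdN
  rw [mul_mul_mul_comm, mul_mul_mul_comm _ (exp _), ← exp_add, ← exp_add]
  refine mul_le_mul_of_nonneg_left (exp_le_exp.2 ?_) (by positivity)
  nlinarith [mul_nonneg (sub_nonneg.2 hx) (sub_nonneg.2 huv)]

noncomputable def posteriorCDF (ν : Measure ℝ) (x t : ℝ) : ℝ :=
  (∫ μ in Iic t, stdN (x - μ) ∂ν) / ∫ μ, stdN (x - μ) ∂ν

noncomputable def posteriorMedian (ν : Measure ℝ) (x : ℝ) : ℝ :=
  sInf {t : ℝ | 1 / 2 ≤ posteriorCDF ν x t}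

section Posterior

variable {ν : Measure ℝ}

lemma integrable_stdN_sub [IsFiniteMeasure ν] (x : ℝ) : Integrable (fun μ => stdN (x - μ)) ν :=
  .of_bound (continuous_stdN.comp (continuous_sub_left x)).aestronglyMeasurable _
    (ae_of_all _ fun μ => by rw [norm_of_nonneg (stdN_pos _).le]; exact stdN_le_inv_sqrt_two_pi _)

lemma integral_stdN_sub_pos [IsFiniteMeasure ν] [NeZero ν] (x : ℝ) :
    0 < ∫ μ, stdN (x - μ) ∂ν := by
  rw [integral_pos_iff_support_of_nonneg (fun μ => (stdN_pos _).le) (integrable_stdN_sub x),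
    Function.support_eq_univ fun μ => (stdN_pos _).ne']
  exact Measure.measure_univ_pos.2 (NeZero.ne ν)

lemma setIntegral_Iic_stdN_sub_mul_le [IsFiniteMeasure ν] {x x' : ℝ} (hx : x ≤ x') (t : ℝ) :
    (∫ μ in Iic t, stdN (x' - μ) ∂ν) * stdN (x - t)
      ≤ stdN (x' - t) * ∫ μ in Iic t, stdN (x - μ) ∂ν := by
  rw [← integral_mul_const, ← integral_const_mul]
  exact setIntegral_mono_on ((integrable_stdN_sub x').mul_const _).integrableOn
    ((integrable_stdN_sub x).const_mul _).integrableOn measurableSet_Iic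
    fun μ hμ => stdN_sub_mul_stdN_sub_le hx hμ

lemma mul_setIntegral_Ioi_stdN_sub_le [IsFiniteMeasure ν] {x x' : ℝ} (hx : x ≤ x') (t : ℝ) :
    stdN (x' - t) * ∫ μ in Ioi t, stdN (x - μ) ∂ν
      ≤ (∫ μ in Ioi t, stdN (x' - μ) ∂ν) * stdN (x - t) := by
  rw [← integral_mul_const, ← integral_const_mul]
  exact setIntegral_mono_on ((integrable_stdN_sub x).const_mul _).integrableOn
    ((integrable_stdN_sub x').mul_const _).integrableOn measurableSet_Ioi
    fun μ hμ => stdN_sub_mul_stdN_sub_le hx (le_of_lt hμ)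

theorem posteriorCDF_le_of_le [IsFiniteMeasure ν] [NeZero ν] {x x' : ℝ} (hx : x ≤ x') (t : ℝ) :
    posteriorCDF ν x' t ≤ posteriorCDF ν x t := by
  set L := fun y => ∫ μ in Iic t, stdN (y - μ) ∂ν
  set U := fun y => ∫ μ in Ioi t, stdN (y - μ) ∂ν
  have hsplit : ∀ y, ∫ μ, stdN (y - μ) ∂ν = L y + U y := fun y => by
    rw [← integral_add_compl measurableSet_Iic (integrable_stdN_sub y), compl_Iic]
  have hL : 0 ≤ L x := setIntegral_nonneg measurableSet_Iic fun μ _ => (stdN_pos _).le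
  have hU : 0 ≤ U x := setIntegral_nonneg measurableSet_Ioi fun μ _ => (stdN_pos _).le
  have hcross : L x' * U x ≤ L x * U x' := by
    refine le_of_mul_le_mul_right ?_ (stdN_pos (x - t))
    calc L x' * U x * stdN (x - t) = L x' * stdN (x - t) * U x := by ring
      _ ≤ stdN (x' - t) * L x * U x :=
        mul_le_mul_of_nonneg_right (setIntegral_Iic_stdN_sub_mul_le hx t) hU
      _ = L x * (stdN (x' - t) * U x) := by ring
      _ ≤ L x * (U x' * stdN (x - t)) :=
        mul_le_mul_of_nonneg_left (mul_setIntegral_Ioi_stdN_sub_le hx t) hL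
      _ = L x * U x' * stdN (x - t) := by ring
  rw [posteriorCDF, posteriorCDF,
    div_le_div_iff₀ (integral_stdN_sub_pos x') (integral_stdN_sub_pos x), hsplit, hsplit]
  linarith

lemma tendsto_posteriorCDF_atTop [IsFiniteMeasure ν] [NeZero ν] (x : ℝ) :
    Tendsto (posteriorCDF ν x) atTop (𝓝 1) := by
  have h := ((aecover_Iic tendsto_id).integral_tendsto_of_countably_generated
    (integrable_stdN_sub (ν := ν) x)).div_const (∫ μ, stdN (x - μ) ∂ν)
  rwa [div_self (integral_stdN_sub_pos x).ne'] at h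

lemma tendsto_posteriorCDF_atBot (x : ℝ) : Tendsto (posteriorCDF ν x) atBot (𝓝 0) := by
  rw [← zero_div (∫ μ, stdN (x - μ) ∂ν)]
  exact (tendsto_integral_Iic_zero (μ := ν) (f := fun μ => stdN (x - μ)) tendsto_id).div_const
    (∫ μ, stdN (x - μ) ∂ν)

theorem monotone_posteriorMedian [IsFiniteMeasure ν] [NeZero ν] :
    Monotone (posteriorMedian ν) := by
  intro x x' hx
  have hne : {t | 1 / 2 ≤ posteriorCDF ν x' t}.Nonempty :=
    ((tendsto_posteriorCDF_atTop x').eventually (eventually_ge_nhds (by norm_num))).exists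
  obtain ⟨b, hb⟩ := eventually_atBot.1 ((tendsto_posteriorCDF_atBot (ν := ν) x).eventually
    (eventually_lt_nhds (by norm_num : (0 : ℝ) < 1 / 2)))
  have hbdd : BddBelow {t | 1 / 2 ≤ posteriorCDF ν x t} :=
    ⟨b, fun t ht => le_of_not_ge fun htb => (hb t htb).not_ge ht⟩
  exact csInf_le_csInf hbdd hne fun t ht => ht.trans (posteriorCDF_le_of_le hx t)

end Posterior

noncomputable def spikeSlabPrior (γ₀ : ℝ → ℝ) (w c : ℝ) : Measure ℝ :=
  ENNReal.ofReal (1 - w) • Measure.dirac 0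
    + ENNReal.ofReal w • volume.withDensity fun μ => ENNReal.ofReal (γ₀ (μ - c))

section SpikeSlab

variable {γ₀ : ℝ → ℝ} {w : ℝ}

lemma isProbabilityMeasure_spikeSlabPrior (hnonneg : ∀ u, 0 ≤ γ₀ u) (hint : Integrable γ₀)
    (hdens : ∫ u, γ₀ u = 1) (hw : 0 ≤ w) (hw1 : w ≤ 1) (c : ℝ) :
    IsProbabilityMeasure (spikeSlabPrior γ₀ w c) := by
  constructor
  have hslab : ∫⁻ μ, ENNReal.ofReal (γ₀ (μ - c)) = 1 := by
    rw [lintegral_sub_right_eq_self (fun u => ENNReal.ofReal (γ₀ u)),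
      ← ofReal_integral_eq_lintegral_ofReal hint (ae_of_all _ hnonneg), hdens, ENNReal.ofReal_one]
  simp only [spikeSlabPrior, Measure.add_apply, Measure.smul_apply, measure_univ,
    withDensity_apply _ MeasurableSet.univ, Measure.restrict_univ, hslab, smul_eq_mul, mul_one]
  rw [← ENNReal.ofReal_add (by linarith) hw, sub_add_cancel, ENNReal.ofReal_one]

lemma setIntegral_spikeSlabPrior (hnonneg : ∀ u, 0 ≤ γ₀ u) (hint : Integrable γ₀)
    (hw : 0 ≤ w) (hw1 : w ≤ 1) {c : ℝ} {f : ℝ → ℝ} (hf : Integrable f (spikeSlabPrior γ₀ w c))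
    {s : Set ℝ} (hs : MeasurableSet s) :
    ∫ μ in s, f μ ∂spikeSlabPrior γ₀ w c
      = (1 - w) * s.indicator f 0 + w * ∫ μ in s, f μ * γ₀ (μ - c) := by
  classical
  have hf' := hf.restrict (s := s)
  rw [spikeSlabPrior, Measure.restrict_add, integrable_add_measure] at hf'
  rw [spikeSlabPrior, Measure.restrict_add, integral_add_measure hf'.1 hf'.2,
    Measure.restrict_smul, Measure.restrict_smul, integral_smul_measure, integral_smul_measure,
    ENNReal.toReal_ofReal (by linarith), ENNReal.toReal_ofReal hw, restrict_dirac,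
    restrict_withDensity hs, integral_withDensity_eq_integral_toReal_smul₀
      (hint.comp_sub_right c).aemeasurable.ennreal_ofReal.restrict
      (ae_of_all _ fun _ => ENNReal.ofReal_lt_top)]
  congr 2
  · by_cases h0 : (0 : ℝ) ∈ s <;> simp [h0]
  · simp only [ENNReal.toReal_ofReal (hnonneg _), smul_eq_mul, mul_comm]

lemma postCDF_eq_posteriorCDF (hnonneg : ∀ u, 0 ≤ γ₀ u) (hint : Integrable γ₀)
    (hdens : ∫ u, γ₀ u = 1) (hw : 0 ≤ w) (hw1 : w ≤ 1) (c x t : ℝ) :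
    postCDF γ₀ w c x t = posteriorCDF (spikeSlabPrior γ₀ w c) x t := by
  have := isProbabilityMeasure_spikeSlabPrior hnonneg hint hdens hw hw1 c
  have hZ := setIntegral_spikeSlabPrior (c := c) hnonneg hint hw hw1 (integrable_stdN_sub x)
    MeasurableSet.univ
  rw [setIntegral_univ, setIntegral_univ] at hZ
  rw [posteriorCDF, hZ,
    setIntegral_spikeSlabPrior (c := c) hnonneg hint hw hw1 (integrable_stdN_sub x)
      measurableSet_Iic, postCDF, marg, conv]
  by_cases ht : (0 : ℝ) ≤ t <;> simp [ht]

end SpikeSlab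

theorem stmt3_general (γ₀ : ℝ → ℝ) (hnonneg : ∀ u, 0 ≤ γ₀ u)
    (hint : Integrable γ₀) (hdens : ∫ u : ℝ, γ₀ u = 1)
    (w c : ℝ) (hw : 0 ≤ w) (hw1 : w ≤ 1) :
    Monotone (fun x => postMedian γ₀ w c x) := by
  have := isProbabilityMeasure_spikeSlabPrior hnonneg hint hdens hw hw1 c
  have hmedian : (fun x => postMedian γ₀ w c x) = posteriorMedian (spikeSlabPrior γ₀ w c) := by
    funext x
    simp only [postMedian, posteriorMedian, postCDF_eq_posteriorCDF hnonneg hint hdens hw hw1]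
  rw [hmedian]
  exact monotone_posteriorMedian

/-- Under the prior `(1−w)δ₀ + w γ₀(·−c)` and `X | μ ∼ N(μ,1)`, the posterior median
`δ(x;w,c)` is a nondecreasing function of `x`. -/
theorem stmt3 (γ₀ : ℝ → ℝ) (hmeas : Measurable γ₀) (hnonneg : ∀ u, 0 ≤ γ₀ u)
    (hint : Integrable γ₀) (hdens : ∫ u : ℝ, γ₀ u = 1)
    (w c : ℝ) (hw : 0 ≤ w) (hw1 : w ≤ 1) :
    Monotone (fun x => postMedian γ₀ w c x) :=
  stmt3_general γ₀ hnonneg hint hdens w c hw hw1
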